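/- Let n ≥ 1 and let μ and ν be finite measures on ℝ^n such that for every u ∈ ℝ^n the function x ↦ exp(⟨u, x⟩) is integrable with respect to both μ and ν, and ∫ exp(⟨u, x⟩) μ(dx) = ∫ exp(⟨u, x⟩) ν(dx) for every u ∈ ℝ^n. Then μ = ν. -/

import Mathlib

/-!
Restricted to a line `t ↦ t • L` with `L` a continuous linear functional, the Laplace transform
is the moment generating function of `L` under `μ`. Since it is finite everywhere, the complex
moment generating function is entire, so by analytic continuation from the real axis it agrees
for `μ` and `ν`; on the imaginary axis this says that `μ.map L` and `ν.map L` have the same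
characteristic function. Hence `μ` and `ν` have the same characteristic function on the dual.
-/

open MeasureTheory ProbabilityTheory Set

namespace ProbabilityTheory

variable {Ω Ω' : Type*} {mΩ : MeasurableSpace Ω} {mΩ' : MeasurableSpace Ω'}
  {μ : Measure Ω} {μ' : Measure Ω'} {X : Ω → ℝ} {Y : Ω' → ℝ}

lemma map_eq_of_mgf' [IsFiniteMeasure μ] [IsFiniteMeasure μ'] (hXm : AEMeasurable X μ)
    (hYm : AEMeasurable Y μ') (hX : integrableExpSet X μ = univ) (hXY : mgf X μ = mgf Y μ')
    (hμμ' : μ = 0 ↔ μ' = 0) : μ.map X = μ'.map Y :=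
  Measure.ext_of_complexMGF_eq hXm hYm <|
    funext fun _ ↦ eqOn_complexMGF_of_mgf' hXY hμμ' (by simp [hX])

end ProbabilityTheory

namespace MeasureTheory.Measure

lemma eq_zero_iff_of_measureReal_univ_eq {α β : Type*} {_ : MeasurableSpace α}
    {_ : MeasurableSpace β} {μ : Measure α} {ν : Measure β} [IsFiniteMeasure μ]
    [IsFiniteMeasure ν] (h : μ.real univ = ν.real univ) : μ = 0 ↔ ν = 0 := by
  simp [← measure_univ_eq_zero, ← measureReal_eq_zero_iff, h]

theorem ext_of_forall_mgf_dual_eq {E : Type*} [NormedAddCommGroup E] [NormedSpace ℝ E]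
    [CompleteSpace E] [MeasurableSpace E] [BorelSpace E] [SecondCountableTopology E]
    {μ ν : Measure E} [IsFiniteMeasure μ] [IsFiniteMeasure ν]
    (hμ : ∀ L : StrongDual ℝ E, integrableExpSet L μ = univ)
    (h : ∀ L : StrongDual ℝ E, mgf L μ = mgf L ν) : μ = ν := by
  have hμν : μ = 0 ↔ ν = 0 := by
    refine eq_zero_iff_of_measureReal_univ_eq ?_
    simpa [mgf_zero_fun] using congrFun (h 0) 0
  refine ext_of_charFunDual <| funext fun L ↦ ?_
  rw [charFunDual_eq_charFun_map_one, charFunDual_eq_charFun_map_one,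
    map_eq_of_mgf' (by fun_prop) (by fun_prop) (hμ L) (h L) hμν]

end MeasureTheory.Measure

lemma StrongDual.exp_mul_apply_eq_exp_sum {ι : Type*} [Fintype ι] [DecidableEq ι]
    (L : StrongDual ℝ (ι → ℝ)) (t : ℝ) :
    (fun x ↦ Real.exp (t * L x)) = fun x ↦ Real.exp (∑ i, t * L (Pi.single i 1) * x i) := by
  ext x
  conv_lhs => rw [← L.sum_comp_single (R := ℝ) (φ := fun _ ↦ ℝ) x, Finset.mul_sum]
  congr! 2 with i
  rw [ContinuousLinearMap.comp_apply, ContinuousLinearMap.single_apply,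
    ← mul_one (x i), ← smul_eq_mul (x i), Pi.single_smul', map_smul, smul_eq_mul]
  ring

theorem measure_eq_of_laplace_eq_general (n : ℕ)
    (μ ν : Measure (Fin n → ℝ)) [IsFiniteMeasure μ] [IsFiniteMeasure ν]
    (hμ : ∀ u : Fin n → ℝ, Integrable (fun x => Real.exp (∑ i, u i * x i)) μ)
    (heq : ∀ u : Fin n → ℝ,
      ∫ x, Real.exp (∑ i, u i * x i) ∂μ = ∫ x, Real.exp (∑ i, u i * x i) ∂ν) :
    μ = ν := by
  refine Measure.ext_of_forall_mgf_dual_eq (fun L ↦ ?_) (fun L ↦ funext fun t ↦ ?_)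
  · refine eq_univ_of_forall fun t ↦ ?_
    rw [integrableExpSet, mem_ofPred_eq, L.exp_mul_apply_eq_exp_sum]
    exact hμ fun i ↦ t * L (Pi.single i 1)
  · rw [mgf, mgf, L.exp_mul_apply_eq_exp_sum]
    exact heq fun i ↦ t * L (Pi.single i 1)

/-- Two finite measures on ℝⁿ with everywhere-finite and equal Laplace transforms are equal. -/
theorem measure_eq_of_laplace_eq (n : ℕ) (hn : 1 ≤ n)
    (μ ν : Measure (Fin n → ℝ)) [IsFiniteMeasure μ] [IsFiniteMeasure ν]
    (hμ : ∀ u : Fin n → ℝ, Integrable (fun x => Real.exp (∑ i, u i * x i)) μ)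
    (hν : ∀ u : Fin n → ℝ, Integrable (fun x => Real.exp (∑ i, u i * x i)) ν)
    (heq : ∀ u : Fin n → ℝ,
      ∫ x, Real.exp (∑ i, u i * x i) ∂μ = ∫ x, Real.exp (∑ i, u i * x i) ∂ν) :
    μ = ν :=
  measure_eq_of_laplace_eq_general n μ ν hμ heq
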